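/- arXiv:1905.10593 — 2 statements merged into one kernel-verified Lean document; each statement's English description precedes it below -/
import Mathlib

section
/- For even r, the inequality E(u, span{Φ^o_{B,l}}_{l=1}^m)₂ ≤ (m+1)^{−r} ‖u^{(r)}‖₂ of Theorem 2 turns into equality for u(x) = sin((m+1)x); i.e., E(sin((m+1)·), span{Φ^o_{B,l}}_{l=1}^m)₂ = (m+1)^{−r} ‖(sin((m+1)·))^{(r)}‖₂. -/
open MeasureTheory Finset

noncomputable section

/-- `fc B k` is the `k`-th Fourier coefficient of the `2π`-periodic function `B`. -/
def fc (B : ℝ → ℂ) (k : ℤ) : ℂ :=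
  (1 / (2 * Real.pi)) * ∫ t in (-Real.pi)..Real.pi, B t * Complex.exp (-Complex.I * (k : ℂ) * (t : ℂ))

/-- `Phi B n l` is the function `Φ_{B,n,l}(x) = (1/(2n)) Σ_{j=0}^{2n-1} e^{iljπ/n} B(x - jπ/n)`. -/
def Phi (B : ℝ → ℂ) (n : ℕ) (l : ℤ) (x : ℝ) : ℂ :=
  (1 / (2 * (n : ℂ))) * ∑ j ∈ Finset.range (2 * n),
    Complex.exp (Complex.I * (l : ℂ) * (j : ℂ) * (Real.pi : ℂ) / (n : ℂ)) * B (x - j * Real.pi / n)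

/-- Even part of a function. -/
def evenPart (f : ℝ → ℂ) : ℝ → ℂ := fun x => (f x + f (-x)) / 2

/-- Odd part of a function. -/
def oddPart (f : ℝ → ℂ) : ℝ → ℂ := fun x => (f x - f (-x)) / 2

/-- `L²` norm over one period `(-π, π)`. -/
def L2norm (f : ℝ → ℂ) : ℝ :=
  (∫ x in (-Real.pi)..Real.pi, ‖f x‖ ^ 2) ^ ((1 : ℝ) / 2)

/-- Square integrability over one period. -/
def sqInt (f : ℝ → ℂ) : Prop :=
  IntervalIntegrable (fun x => ‖f x‖ ^ 2) volume (-Real.pi) Real.pi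

/-- Best `L²` approximation of `f` by the set `S`. -/
def bestApprox (f : ℝ → ℂ) (S : Set (ℝ → ℂ)) : ℝ :=
  ⨅ T : S, L2norm (fun x => f x - (T : ℝ → ℂ) x)

/-- The periodic Sobolev class `W^{(r)}₂`. -/
def SobolevPer (r : ℕ) (f : ℝ → ℂ) : Prop :=
  Function.Periodic f (2 * Real.pi) ∧
  (∀ k < r, Differentiable ℝ (iteratedDeriv k f)) ∧
  sqInt (iteratedDeriv r f)

/-- The space `S^×_{B,n,m} = span {Φ_{B,l}}_{l=1-m}^{m-1}`. -/
def Sspan (B : ℝ → ℂ) (n m : ℕ) : Set (ℝ → ℂ) :=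
  ↑(Submodule.span ℂ {f : ℝ → ℂ | ∃ l : ℤ, 1 - (m : ℤ) ≤ l ∧ l ≤ (m : ℤ) - 1 ∧ f = Phi B n l})

end

/-!
Shifting a `2π`-periodic `B` by `θ` multiplies its `k`-th Fourier coefficient by `e^{-ikθ}`,
so the `k`-th coefficient of `Phi B n l` is `fc B k` times `(1/2n) ∑_j e^{i(l-k)jπ/n}`, which
vanishes unless `2n ∣ l - k`. For `1 ≤ l ≤ m < n` neither `l - (m+1)` nor `l + (m+1)` is a
multiple of `2n`, so every element of the span of the odd parts has vanishing coefficients at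
`±(m+1)` and is orthogonal to `sin((m+1)x)`. By Pythagoras the best approximation of
`sin((m+1)x)` is `0`, and for even `r` the `r`-th derivative of `sin((m+1)x)` is
`±(m+1)^r sin((m+1)x)`.
-/

open scoped Real ComplexConjugate

noncomputable abbrev periodMeasure : Measure ℝ := volume.restrict (Set.Ioc (-π) π)

section PeriodL2

variable {E : Type*} [NormedAddCommGroup E]

lemma neg_pi_le_pi : -π ≤ π := by linarith [Real.pi_pos]

lemma intervalIntegrable_iff_integrable_periodMeasure {f : ℝ → E} :
    IntervalIntegrable f volume (-π) π ↔ Integrable f periodMeasure :=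
  intervalIntegrable_iff_integrableOn_Ioc_of_le neg_pi_le_pi

lemma memLp_periodMeasure_iff {f : ℝ → ℂ} :
    MemLp f 2 periodMeasure ↔ IntervalIntegrable f volume (-π) π ∧ sqInt f := by
  simp only [sqInt, intervalIntegrable_iff_integrable_periodMeasure]
  refine ⟨fun h => ⟨h.integrable one_le_two, ?_⟩, fun ⟨h1, h2⟩ => ?_⟩
  · simpa using (memLp_two_iff_integrable_sq_norm h.1).mp h
  · exact (memLp_two_iff_integrable_sq_norm h1.1).mpr (by simpa using h2)

lemma Function.Periodic.intervalIntegrable_comp_sub {f : ℝ → E}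
    (hf : Function.Periodic f (2 * π)) (hint : IntervalIntegrable f volume (-π) π) (θ : ℝ) :
    IntervalIntegrable (fun x => f (x - θ)) volume (-π) π := by
  have hall := hf.intervalIntegrable (t := -π) (by positivity)
    (by rwa [show -π + 2 * π = π by ring])
  simpa using (hall (-π - θ) (π - θ)).comp_sub_right θ

lemma Function.Periodic.memLp_comp_sub {f : ℝ → ℂ} (hf : Function.Periodic f (2 * π))
    (hL2 : MemLp f 2 periodMeasure) (θ : ℝ) :
    MemLp (fun x => f (x - θ)) 2 periodMeasure := by
  rw [memLp_periodMeasure_iff] at hL2 ⊢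
  have hsq : Function.Periodic (fun x => ‖f x‖ ^ 2) (2 * π) := fun x => by simp only [hf x]
  exact ⟨hf.intervalIntegrable_comp_sub hL2.1 θ, hsq.intervalIntegrable_comp_sub hL2.2 θ⟩

lemma intervalIntegrable_comp_neg {f : ℝ → E} (hf : IntervalIntegrable f volume (-π) π) :
    IntervalIntegrable (fun x => f (-x)) volume (-π) π := by
  simpa using ((IntervalIntegrable.iff_comp_neg (by finiteness)).mp hf).symm

lemma MeasureTheory.MemLp.comp_neg_periodMeasure {f : ℝ → ℂ} (hf : MemLp f 2 periodMeasure) :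
    MemLp (fun x => f (-x)) 2 periodMeasure := by
  rw [memLp_periodMeasure_iff] at hf ⊢
  exact ⟨intervalIntegrable_comp_neg hf.1, intervalIntegrable_comp_neg hf.2⟩

end PeriodL2

open Complex in
lemma exp_int_mul_periodic (k : ℤ) :
    Function.Periodic (fun t : ℝ => exp (-I * k * t)) (2 * π) := by
  intro t
  simp only
  rw [show -I * k * ((t + 2 * π : ℝ) : ℂ) = -I * k * t + (-k : ℤ) * (2 * π * I) by
      push_cast; ring,
    exp_add, exp_int_mul_two_pi_mul_I, mul_one]

lemma IntervalIntegrable.mul_exp {f : ℝ → ℂ} {a b : ℝ}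
    (hf : IntervalIntegrable f volume a b) (c : ℂ) :
    IntervalIntegrable (fun t => f t * Complex.exp (c * t)) volume a b :=
  hf.mul_continuousOn (by fun_prop)

lemma intervalIntegrable_of_fc_ne_zero {f : ℝ → ℂ} {k : ℤ} (h : fc f k ≠ 0) :
    IntervalIntegrable f volume (-π) π := by
  have hk :
      IntervalIntegrable (fun t => f t * Complex.exp (-Complex.I * k * t)) volume (-π) π := by
    by_contra hk
    exact h (by rw [fc, intervalIntegral.integral_undef hk, mul_zero])
  convert hk.mul_exp (Complex.I * k) using 2 with t
  rw [mul_assoc, ← Complex.exp_add, show -Complex.I * k * t + Complex.I * k * t = 0 by ring,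
    Complex.exp_zero, mul_one]

lemma fc_const_mul (c : ℂ) (f : ℝ → ℂ) (k : ℤ) :
    fc (fun x => c * f x) k = c * fc f k := by
  simp only [fc, mul_assoc, intervalIntegral.integral_const_mul]
  ring

lemma fc_sub {f g : ℝ → ℂ} (hf : IntervalIntegrable f volume (-π) π)
    (hg : IntervalIntegrable g volume (-π) π) (k : ℤ) :
    fc (fun x => f x - g x) k = fc f k - fc g k := by
  simp only [fc, sub_mul]
  rw [intervalIntegral.integral_sub (hf.mul_exp _) (hg.mul_exp _), mul_sub]

lemma fc_add {f g : ℝ → ℂ} (hf : IntervalIntegrable f volume (-π) π)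
    (hg : IntervalIntegrable g volume (-π) π) (k : ℤ) :
    fc (f + g) k = fc f k + fc g k := by
  simp only [fc, Pi.add_apply, add_mul]
  rw [intervalIntegral.integral_add (hf.mul_exp _) (hg.mul_exp _), mul_add]

lemma fc_finset_sum {ι : Type*} (s : Finset ι) {f : ι → ℝ → ℂ}
    (hf : ∀ j ∈ s, IntervalIntegrable (f j) volume (-π) π) (k : ℤ) :
    fc (fun x => ∑ j ∈ s, f j x) k = ∑ j ∈ s, fc (f j) k := by
  simp only [fc, Finset.sum_mul]
  rw [intervalIntegral.integral_finsetSum fun j hj => (hf j hj).mul_exp _, Finset.mul_sum]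

lemma fc_comp_sub {f : ℝ → ℂ} (hf : Function.Periodic f (2 * π)) (θ : ℝ) (k : ℤ) :
    fc (fun x => f (x - θ)) k = Complex.exp (-Complex.I * k * θ) * fc f k := by
  set g : ℝ → ℂ := fun y => f y * Complex.exp (-Complex.I * k * y)
  have hg : Function.Periodic g (2 * π) := hf.mul (exp_int_mul_periodic k)
  have hshift : (∫ x in -π..π, f (x - θ) * Complex.exp (-Complex.I * k * x))
      = ∫ x in -π..π, Complex.exp (-Complex.I * k * θ) * g (x - θ) := by
    congr 1 with x
    simp only [g, mul_left_comm (Complex.exp _), ← Complex.exp_add]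
    congr 2
    push_cast
    ring
  have hperiod := hg.intervalIntegral_add_eq (-π - θ) (-π)
  rw [show -π - θ + 2 * π = π - θ by ring, show -π + 2 * π = π by ring] at hperiod
  rw [fc, fc, hshift, intervalIntegral.integral_const_mul, intervalIntegral.integral_comp_sub_right,
    hperiod]
  ring

lemma fc_comp_neg (f : ℝ → ℂ) (k : ℤ) : fc (fun x => f (-x)) k = fc f (-k) := by
  have h := intervalIntegral.integral_comp_neg (a := -π) (b := π)
    (fun t => f t * Complex.exp (-Complex.I * ((-k : ℤ) : ℂ) * t))
  rw [neg_neg] at h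
  simp only [fc, ← h]
  congr 2 with x
  push_cast
  ring_nf

lemma fc_oddPart {f : ℝ → ℂ} (hf : IntervalIntegrable f volume (-π) π) (k : ℤ) :
    fc (oddPart f) k = (fc f k - fc f (-k)) / 2 := by
  have h : oddPart f = fun x => 2⁻¹ * (f x - f (-x)) := by
    ext x
    simp only [oddPart]
    ring
  rw [h, fc_const_mul, fc_sub hf (intervalIntegrable_comp_neg hf), fc_comp_neg]
  ring

section Phi

open Complex in
lemma sum_exp_eq_zero_of_not_dvd {n : ℕ} {k : ℤ} (hk : ¬ (2 * n : ℤ) ∣ k) :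
    ∑ j ∈ Finset.range (2 * n), exp (I * k * j * π / n) = 0 := by
  rcases Nat.eq_zero_or_pos n with rfl | hn
  · simp
  have hnC : (n : ℂ) ≠ 0 := by exact_mod_cast hn.ne'
  set q := exp (I * k * π / n)
  have hpow : ∀ j : ℕ, exp (I * k * j * π / n) = q ^ j := fun j => by
    rw [← exp_nat_mul]
    ring_nf
  have hq : q ≠ 1 := by
    rintro hq1
    obtain ⟨t, ht⟩ := exp_eq_one_iff.mp hq1
    refine hk ⟨t, ?_⟩
    have : (k : ℂ) = 2 * n * t := by
      field_simp at ht
      linear_combination ht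
    exact_mod_cast this
  have hq2n : q ^ (2 * n) = 1 := by
    rw [← exp_nat_mul, ← exp_int_mul_two_pi_mul_I k]
    congr 1
    push_cast
    field_simp
  simp only [hpow, geom_sum_eq hq, hq2n, sub_self, zero_div]

variable {B : ℝ → ℂ} {n : ℕ}

lemma fc_Phi (hper : Function.Periodic B (2 * π)) (hint : IntervalIntegrable B volume (-π) π)
    (l k : ℤ) :
    fc (Phi B n l) k = 1 / (2 * n) *
      (∑ j ∈ Finset.range (2 * n), Complex.exp (Complex.I * (l - k : ℤ) * j * π / n)) *
        fc B k := by
  unfold Phi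
  rw [fc_const_mul, fc_finset_sum (Finset.range (2 * n))
    fun j _ => (hper.intervalIntegrable_comp_sub hint _).const_mul _]
  simp only [fc_const_mul, fc_comp_sub hper, Finset.mul_sum, Finset.sum_mul, ← mul_assoc,
    ← Complex.exp_add]
  refine Finset.sum_congr rfl fun j _ => ?_
  push_cast
  ring_nf

lemma fc_Phi_eq_zero (hper : Function.Periodic B (2 * π))
    (hint : IntervalIntegrable B volume (-π) π) {l k : ℤ} (hlk : ¬ (2 * n : ℤ) ∣ l - k) :
    fc (Phi B n l) k = 0 := by
  rw [fc_Phi hper hint, sum_exp_eq_zero_of_not_dvd hlk, mul_zero, zero_mul]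

lemma memLp_Phi (hper : Function.Periodic B (2 * π)) (hL2 : MemLp B 2 periodMeasure) (l : ℤ) :
    MemLp (Phi B n l) 2 periodMeasure :=
  (memLp_finsetSum _ fun _ _ => (hper.memLp_comp_sub hL2 _).const_mul _).const_mul _

lemma MeasureTheory.MemLp.oddPart {f : ℝ → ℂ} (hf : MemLp f 2 periodMeasure) :
    MemLp (oddPart f) 2 periodMeasure := by
  rw [show _root_.oddPart f = fun x => (f x - f (-x)) * 2⁻¹ from
    funext fun x => div_eq_mul_inv _ _]
  exact (hf.sub hf.comp_neg_periodMeasure).mul_const 2⁻¹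

def fcKerL2 (k : ℤ) : Submodule ℂ (ℝ → ℂ) where
  carrier := {T | MemLp T 2 periodMeasure ∧ fc T k = 0}
  zero_mem' := ⟨MemLp.zero, by simp [fc]⟩
  add_mem' := fun ⟨hf, hf0⟩ ⟨hg, hg0⟩ =>
    ⟨hf.add hg, by rw [fc_add (memLp_periodMeasure_iff.mp hf).1 (memLp_periodMeasure_iff.mp hg).1,
      hf0, hg0, add_zero]⟩
  smul_mem' := fun c _ ⟨hf, hf0⟩ =>
    ⟨hf.const_smul c, (fc_const_mul c _ k).trans (by rw [hf0, mul_zero])⟩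

lemma oddPart_Phi_mem_fcKerL2 (hper : Function.Periodic B (2 * π))
    (hL2 : MemLp B 2 periodMeasure) {l k : ℤ} (hsub : ¬ (2 * n : ℤ) ∣ l - k)
    (hadd : ¬ (2 * n : ℤ) ∣ l + k) :
    oddPart (Phi B n l) ∈ fcKerL2 k := by
  have hint := (memLp_periodMeasure_iff.mp hL2).1
  refine ⟨(memLp_Phi hper hL2 l).oddPart, ?_⟩
  rw [fc_oddPart (memLp_periodMeasure_iff.mp (memLp_Phi hper hL2 l)).1,
    fc_Phi_eq_zero hper hint hsub, fc_Phi_eq_zero hper hint (by rwa [sub_neg_eq_add]), sub_zero,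
    zero_div]

lemma oddPart_Phi_mem_fcKerL2_inf (hper : Function.Periodic B (2 * π))
    (hL2 : MemLp B 2 periodMeasure) {l k : ℤ} (hl : 0 < l) (hlk : l < k) (hkn : l + k < 2 * n) :
    oddPart (Phi B n l) ∈ fcKerL2 k ⊓ fcKerL2 (-k) := by
  have hsub : ¬ (2 * n : ℤ) ∣ l - k := fun h =>
    (sub_neg.mpr hlk).ne (Int.eq_zero_of_abs_lt_dvd h (abs_lt.mpr ⟨by linarith, by linarith⟩))
  have hadd : ¬ (2 * n : ℤ) ∣ l + k := fun h =>
    (by linarith : l + k ≠ 0) (Int.eq_zero_of_abs_lt_dvd h (abs_lt.mpr ⟨by linarith, hkn⟩))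
  exact ⟨oddPart_Phi_mem_fcKerL2 hper hL2 hsub hadd,
    oddPart_Phi_mem_fcKerL2 hper hL2 (by rwa [sub_neg_eq_add]) (by rwa [← sub_eq_add_neg])⟩

end Phi

open Complex in
lemma integral_sin_int_mul {T : ℝ → ℂ} (hT : IntervalIntegrable T volume (-π) π) (k : ℤ) :
    ∫ x in -π..π, sin (k * x) * T x = π * I * (fc T k - fc T (-k)) := by
  have hsin : ∀ x : ℝ, sin (k * x) * T x
      = I / 2 * (T x * exp (-I * k * x) - T x * exp (-I * ((-k : ℤ) : ℂ) * x)) := fun x => by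
    rw [sin]
    push_cast
    ring_nf
  simp only [hsin, fc]
  rw [intervalIntegral.integral_const_mul, intervalIntegral.integral_sub (hT.mul_exp _)
    (hT.mul_exp _)]
  field_simp

lemma integral_sin_int_mul_conj_eq_zero {T : ℝ → ℂ} {k : ℤ}
    (hT : T ∈ fcKerL2 k ⊓ fcKerL2 (-k)) :
    ∫ x in -π..π, Complex.sin (k * x) * conj (T x) = 0 := by
  obtain ⟨⟨hL2, hk⟩, -, hnegk⟩ := hT
  have hreal : ∀ x : ℝ, Complex.sin (k * x) * conj (T x) = conj (Complex.sin (k * x) * T x) :=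
    fun x => by rw [map_mul, ← Complex.sin_conj, map_mul, Complex.conj_ofReal, map_intCast]
  simp only [hreal, intervalIntegral.intervalIntegral_conj,
    integral_sin_int_mul (memLp_periodMeasure_iff.mp hL2).1, hk, hnegk, sub_zero, mul_zero,
    map_zero]

lemma iteratedDeriv_two_mul_sin (c : ℂ) (s : ℕ) :
    iteratedDeriv (2 * s) (fun x : ℝ => Complex.sin (c * x))
      = fun x : ℝ => (-c ^ 2) ^ s * Complex.sin (c * x) := by
  have hderiv : ∀ x : ℝ,
      HasDerivAt (fun x : ℝ => Complex.sin (c * x)) (Complex.cos (c * x) * c) x :=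
    fun x => by simpa using ((hasDerivAt_id (x : ℂ)).const_mul c).csin.comp_ofReal
  have hderiv2 : ∀ x : ℝ,
      HasDerivAt (fun x : ℝ => Complex.cos (c * x) * c) (-Complex.sin (c * x) * c * c) x :=
    fun x => by simpa using (((hasDerivAt_id (x : ℂ)).const_mul c).ccos.comp_ofReal).mul_const c
  have hdd : deriv (deriv fun x : ℝ => Complex.sin (c * x))
      = fun x : ℝ => -c ^ 2 • Complex.sin (c * x) := by
    ext x
    rw [funext fun y => (hderiv y).deriv, (hderiv2 x).deriv, smul_eq_mul]
    ring
  induction s with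
  | zero => simp
  | succ s ih =>
    ext x
    rw [show 2 * (s + 1) = 2 * s + 1 + 1 by ring, iteratedDeriv_succ', iteratedDeriv_succ', hdd,
      iteratedDeriv_fun_const_smul_field, ih, smul_eq_mul]
    ring

lemma L2norm_nonneg (f : ℝ → ℂ) : 0 ≤ L2norm f :=
  Real.rpow_nonneg (intervalIntegral.integral_nonneg neg_pi_le_pi fun _ _ => by positivity) _

lemma L2norm_const_mul (c : ℂ) (f : ℝ → ℂ) :
    L2norm (fun x => c * f x) = ‖c‖ * L2norm f := by
  simp only [L2norm, norm_mul, mul_pow, intervalIntegral.integral_const_mul, ← Real.sqrt_eq_rpow]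
  rw [Real.sqrt_mul (by positivity), Real.sqrt_sq (norm_nonneg c)]

lemma L2norm_le_L2norm_sub {f T : ℝ → ℂ} (hf : MemLp f 2 periodMeasure)
    (hT : MemLp T 2 periodMeasure) (horth : ∫ x in -π..π, f x * conj (T x) = 0) :
    L2norm f ≤ L2norm (fun x => f x - T x) := by
  have hfsq := (memLp_periodMeasure_iff.mp hf).2
  have hTsq := (memLp_periodMeasure_iff.mp hT).2
  have hprod : Integrable (fun x => f x * conj (T x)) periodMeasure := hf.integrable_mul hT.star
  have hprodRe : IntervalIntegrable (fun x => (f x * conj (T x)).re) volume (-π) π :=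
    intervalIntegrable_iff_integrable_periodMeasure.mpr hprod.re
  have hre : ∫ x in -π..π, (f x * conj (T x)).re = 0 := by
    simpa only [RCLike.re_to_complex, horth, Complex.zero_re] using
      intervalIntegral.intervalIntegral_re
        (intervalIntegrable_iff_integrable_periodMeasure.mpr hprod)
  have hpyth : ∫ x in -π..π, ‖f x - T x‖ ^ 2
      = (∫ x in -π..π, ‖f x‖ ^ 2) + ∫ x in -π..π, ‖T x‖ ^ 2 := by
    have hpt : ∀ x,
        ‖f x - T x‖ ^ 2 = ‖f x‖ ^ 2 + ‖T x‖ ^ 2 - 2 * (f x * conj (T x)).re :=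
      fun x => by simp only [Complex.sq_norm, Complex.normSq_sub]
    simp only [hpt]
    rw [intervalIntegral.integral_sub (hfsq.add hTsq) (hprodRe.const_mul 2),
      intervalIntegral.integral_const_mul, hre, intervalIntegral.integral_add hfsq hTsq]
    ring
  refine Real.rpow_le_rpow (intervalIntegral.integral_nonneg neg_pi_le_pi fun _ _ => by positivity)
    ?_ (by norm_num)
  have hT0 : 0 ≤ ∫ x in -π..π, ‖T x‖ ^ 2 :=
    intervalIntegral.integral_nonneg neg_pi_le_pi fun _ _ => by positivity
  linarith

lemma bestApprox_eq_L2norm {f : ℝ → ℂ} {S : Set (ℝ → ℂ)} (hS : 0 ∈ S)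
    (hle : ∀ T ∈ S, L2norm f ≤ L2norm (fun x => f x - T x)) :
    bestApprox f S = L2norm f := by
  have : Nonempty S := ⟨⟨0, hS⟩⟩
  rw [bestApprox]
  refine le_antisymm ?_ (le_ciInf fun T => hle T T.2)
  have hbdd : BddBelow (Set.range fun T : S => L2norm fun x => f x - (T : ℝ → ℂ) x) :=
    ⟨0, by rintro _ ⟨T, rfl⟩; exact L2norm_nonneg _⟩
  exact (ciInf_le hbdd ⟨0, hS⟩).trans_eq (by simp)

theorem stmt14_general (B : ℝ → ℂ) (r n m : ℕ) (hreven : Even r)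
    (hmn : m + 1 ≤ n)
    (hper : Function.Periodic B (2 * Real.pi)) (hB : sqInt B)
    (h3 : ∀ l : ℤ, 1 ≤ l → l ≤ (m : ℤ) → fc B l ≠ 0 ∧
      0 ≤ ∑' k : ℤ, ‖fc B (l + 2 * (n : ℤ) * k)‖ ^ 2 /
            (1 / (((l + 2 * (n : ℤ) * k : ℤ) : ℝ)) ^ (2 * r) - 1 / ((m : ℝ) + 1) ^ (2 * r))) :
    bestApprox (fun x : ℝ => Complex.sin (((m : ℂ) + 1) * (x : ℂ)))
      ↑(Submodule.span ℂ {f : ℝ → ℂ | ∃ l : ℤ, 1 ≤ l ∧ l ≤ (m : ℤ) ∧ f = oddPart (Phi B n l)}) =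
      (1 / ((m : ℝ) + 1) ^ r) *
        L2norm (iteratedDeriv r (fun x : ℝ => Complex.sin (((m : ℂ) + 1) * (x : ℂ)))) := by
  have hsin : (fun x : ℝ => Complex.sin (((m : ℂ) + 1) * x))
      = fun x : ℝ => Complex.sin (((m + 1 : ℤ) : ℂ) * x) := by
    push_cast
    rfl
  have hsinL2 : MemLp (fun x : ℝ => Complex.sin (((m + 1 : ℤ) : ℂ) * x)) 2 periodMeasure :=
    memLp_periodMeasure_iff.mpr ⟨(by fun_prop : Continuous _).intervalIntegrable _ _,
      (by fun_prop : Continuous _).intervalIntegrable _ _⟩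
  have hspan :
      Submodule.span ℂ {f : ℝ → ℂ | ∃ l : ℤ, 1 ≤ l ∧ l ≤ (m : ℤ) ∧ f = oddPart (Phi B n l)}
      ≤ fcKerL2 (m + 1) ⊓ fcKerL2 (-(m + 1)) := by
    refine Submodule.span_le.mpr ?_
    rintro _ ⟨l, hl1, hlm, rfl⟩
    -- `sqInt B` does not make `B` measurable; a nonzero Fourier coefficient does.
    have hL2 : MemLp B 2 periodMeasure :=
      memLp_periodMeasure_iff.mpr ⟨intervalIntegrable_of_fc_ne_zero (h3 l hl1 hlm).1, hB⟩
    exact oddPart_Phi_mem_fcKerL2_inf hper hL2 (by omega) (by omega) (by omega)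
  rw [hsin, bestApprox_eq_L2norm (Submodule.zero_mem _) fun T hT => L2norm_le_L2norm_sub hsinL2
    (hspan hT).1.1 (integral_sin_int_mul_conj_eq_zero (hspan hT))]
  obtain ⟨s, rfl⟩ := hreven
  have hnorm : ‖((m + 1 : ℤ) : ℂ)‖ = (m : ℝ) + 1 := by
    exact_mod_cast Complex.norm_natCast (m + 1)
  rw [← two_mul, iteratedDeriv_two_mul_sin, L2norm_const_mul, norm_pow, norm_neg, norm_pow, hnorm,
    ← pow_mul, ← mul_assoc, one_div_mul_cancel (by positivity), one_mul]

theorem stmt14 (B : ℝ → ℂ) (r n m : ℕ) (hr : 1 ≤ r) (hreven : Even r)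
    (hm : 1 ≤ m) (hmn : m + 1 ≤ n)
    (hper : Function.Periodic B (2 * Real.pi)) (hB : sqInt B) (γ : ℤ → ℂ)
    (h1 : ∀ l : ℤ, 1 ≤ l → l ≤ (m : ℤ) → γ l ≠ 0 ∧
      ∀ k : ℤ, fc B (-l - 2 * (n : ℤ) * k) = γ l * fc B (l + 2 * (n : ℤ) * k))
    (h2 : ∀ ν : ℕ, 1 ≤ ν → fc B (2 * (n : ℤ) * (ν : ℤ)) = fc B (-(2 * (n : ℤ) * (ν : ℤ))))
    (h3 : ∀ l : ℤ, 1 ≤ l → l ≤ (m : ℤ) → fc B l ≠ 0 ∧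
      0 ≤ ∑' k : ℤ, ‖fc B (l + 2 * (n : ℤ) * k)‖ ^ 2 /
            (1 / (((l + 2 * (n : ℤ) * k : ℤ) : ℝ)) ^ (2 * r) - 1 / ((m : ℝ) + 1) ^ (2 * r))) :
    bestApprox (fun x : ℝ => Complex.sin (((m : ℂ) + 1) * (x : ℂ)))
      ↑(Submodule.span ℂ {f : ℝ → ℂ | ∃ l : ℤ, 1 ≤ l ∧ l ≤ (m : ℤ) ∧ f = oddPart (Phi B n l)}) =
      (1 / ((m : ℝ) + 1) ^ r) *
        L2norm (iteratedDeriv r (fun x : ℝ => Complex.sin (((m : ℂ) + 1) * (x : ℂ)))) :=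
  stmt14_general B r n m hreven hmn hper hB h3
end

section
/- Let r, n, m ∈ ℕ with m ≤ n, and suppose B ∈ L² satisfies |l+2nk|^r |c_{l+2nk}(B)| ≤ |l|^r |c_l(B)| for all 1 ≤ |l| ≤ m−1 and all k ∈ ℤ. Then for all 1 ≤ |l| ≤ m−1, Σ_{k∈ℤ} |c_{l+2nk}(B)|² / ( (l+2nk)^{−2r} − m^{−2r} ) ≥ 0. -/
open MeasureTheory Finset

/-!
Write `x_k = (l + 2nk)²`, `M = m²` and `w_k = x_k ^ r ‖c_{l+2nk}(B)‖²`, so that the `k`-th term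
is `M ^ r w_k / (M ^ r - x_k ^ r)`. Only `x_0 = l²` lies below `M`; every other `x_k` exceeds it.
As `w_k ≤ w_0` and the denominators with `k ≠ 0` are negative, each term is at least
`M ^ r w_0 / (M ^ r - x_k ^ r)`, and since secant slopes of the convex `t ↦ t ^ r` through `M`
increase, this is at least `c / (M - x_k)` for a constant `c ≥ 0`, with equality at `k = 0`.
This reduces the claim to `r = 1`. There, `1 / (m² - y²) = (1 / (m - y) + 1 / (m + y)) / (2m)`,
and pairing `1 / (m - l - 2n(k + 1))` with `1 / (m + l + 2nk)` (opposite signs, and the sum of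
the denominators is `2(m - n) ≤ 0`) makes every symmetric partial sum nonnegative, and the series
is their limit.
-/

theorem tsum_nonneg_of_sum_Ico_nonneg {α : Type*} [AddCommMonoid α] [Preorder α]
    [TopologicalSpace α] [ClosedIciTopology α] {f : ℤ → α}
    (h : ∀ N : ℕ, 0 ≤ ∑ k ∈ Ico (-(N : ℤ)) N, f k) : 0 ≤ ∑' k, f k := by
  by_cases hf : Summable f
  · exact ge_of_tendsto' (SummationFilter.hasSum_symmetricIco_int_iff.mp
      (hf.hasSum.mono_left (SummationFilter.symmetricIco ℤ).le_atTop)) h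
  · rw [tsum_eq_zero_of_not_summable hf]

theorem slope_mul_le_pow_sub_pow {a M x : ℝ} (r : ℕ) (ha : 0 ≤ a) (haM : a < M) (hMx : M < x) :
    (M ^ r - a ^ r) / (M - a) * (x - M) ≤ x ^ r - M ^ r := by
  have h := (convexOn_pow r).slope_mono_adjacent (Set.mem_Ici.mpr ha)
    (Set.mem_Ici.mpr (ha.trans (haM.trans hMx).le)) haM hMx
  rwa [le_div_iff₀ (sub_pos.mpr hMx)] at h

theorem mul_one_div_sub_le_div_one_div_pow_sub {r : ℕ} (hr : r ≠ 0) {a M x A w : ℝ}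
    (ha : 0 ≤ a) (haM : a < M) (hMx : M < x) (hw : 0 ≤ w) (hA : x ^ r * A ≤ w) :
    M ^ r * w * (M - a) / (M ^ r - a ^ r) * (1 / (M - x)) ≤ A / (1 / x ^ r - 1 / M ^ r) := by
  have hM : 0 < M := ha.trans_lt haM
  have hx : 0 < x := hM.trans hMx
  have hMa : 0 < M ^ r - a ^ r := sub_pos.mpr (pow_lt_pow_left₀ haM ha hr)
  have hxM : 0 < x ^ r - M ^ r := sub_pos.mpr (pow_lt_pow_left₀ hMx hM.le hr)
  have hsecant := slope_mul_le_pow_sub_pow r ha haM hMx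
  set s := (M ^ r - a ^ r) / (M - a) with hs
  have hsx : 0 < s * (x - M) := mul_pos (div_pos hMa (sub_pos.mpr haM)) (sub_pos.mpr hMx)
  have key : M ^ r * (x ^ r * A) / (x ^ r - M ^ r) ≤ M ^ r * w / (s * (x - M)) :=
    calc M ^ r * (x ^ r * A) / (x ^ r - M ^ r) ≤ M ^ r * w / (x ^ r - M ^ r) := by gcongr
      _ ≤ M ^ r * w / (s * (x - M)) := by gcongr
  have hMa' : M - a ≠ 0 := (sub_pos.mpr haM).ne'
  have hxM' : x - M ≠ 0 := (sub_pos.mpr hMx).ne'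
  calc M ^ r * w * (M - a) / (M ^ r - a ^ r) * (1 / (M - x))
      = -(M ^ r * w / (s * (x - M))) := by
        rw [hs, ← neg_sub x M]
        field_simp
    _ ≤ -(M ^ r * (x ^ r * A) / (x ^ r - M ^ r)) := neg_le_neg key
    _ = A / (1 / x ^ r - 1 / M ^ r) := by
        rw [← neg_sub (M ^ r), div_neg, neg_neg]
        field_simp

section ShiftedFrequencies

variable {l m n : ℝ}

theorem sq_lt_add_two_mul_mul_sq (hlm : |l| < m) (hmn : m ≤ n) {k : ℤ} (hk : k ≠ 0) :
    m ^ 2 < (l + 2 * n * k) ^ 2 := by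
  have hm : 0 < m := (abs_nonneg l).trans_lt hlm
  have hk' : (1 : ℝ) ≤ |(k : ℝ)| := by exact_mod_cast Int.one_le_abs hk
  have h2nk : 2 * n ≤ |2 * n * k| := by
    rw [abs_mul, abs_of_nonneg (by linarith : (0 : ℝ) ≤ 2 * n)]
    nlinarith
  have htri : |2 * n * k| ≤ |l + 2 * n * k| + |l| := by
    simpa using abs_sub (l + 2 * n * k) l
  exact sq_lt_sq.mpr (by rw [abs_of_pos hm]; linarith)

theorem sum_Ico_one_div_sq_sub_sq_nonneg (hlm : |l| < m) (hmn : m ≤ n) (N : ℕ) :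
    0 ≤ ∑ k ∈ Ico (-(N : ℤ)) N, 1 / (m ^ 2 - (l + 2 * n * k) ^ 2) := by
  obtain ⟨hml, hlm⟩ := abs_lt.mp hlm
  rcases N.eq_zero_or_pos with rfl | hN
  · simp
  set p : ℤ → ℝ := fun k => 1 / (m - l - 2 * n * k)
  set q : ℤ → ℝ := fun k => 1 / (m + l + 2 * n * k)
  have hopp : ∀ k : ℤ, (m + l + 2 * n * k) * (m - l - 2 * n * (k + 1)) < 0 := by
    intro k
    rcases le_or_gt 0 k with hk | hk
    · have hk' : (0 : ℝ) ≤ k := by exact_mod_cast hk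
      exact mul_neg_of_pos_of_neg (by nlinarith) (by nlinarith)
    · have hk' : (k : ℝ) ≤ -1 := by exact_mod_cast Int.le_sub_one_of_lt hk
      exact mul_neg_of_neg_of_pos (by nlinarith) (by nlinarith)
  have hpair : ∀ k : ℤ, 0 ≤ p (k + 1) + q k := by
    intro k
    have h := hopp k
    have hq : m + l + 2 * n * k ≠ 0 := left_ne_zero_of_mul h.ne
    have hp : m - l - 2 * n * (k + 1) ≠ 0 := right_ne_zero_of_mul h.ne
    simp only [p, q, Int.cast_add, Int.cast_one]
    rw [div_add_div _ _ hp hq]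
    exact div_nonneg_of_nonpos (by nlinarith) (by nlinarith)
  have hsplit : ∀ k : ℤ, 1 / (m ^ 2 - (l + 2 * n * k) ^ 2)
      = 1 / (2 * m) * ((p (k + 1) + q k) + (p k - p (k + 1))) := by
    intro k
    have hm : m ≠ 0 := by linarith
    have hq : m + l + 2 * n * k ≠ 0 := left_ne_zero_of_mul (hopp k).ne
    have hp : m - l - 2 * n * k ≠ 0 := by
      simpa using right_ne_zero_of_mul (hopp (k - 1)).ne
    rw [show m ^ 2 - (l + 2 * n * k) ^ 2 = (m - l - 2 * n * k) * (m + l + 2 * n * k) by ring]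
    simp only [p, q]
    field_simp
    ring
  have hends : 0 ≤ p (-N) - p N := by
    have hN' : (1 : ℝ) ≤ N := by exact_mod_cast hN
    simp only [p, Int.cast_neg, Int.cast_natCast]
    have h1 : 0 < 1 / (m - l - 2 * n * -N) := one_div_pos.mpr (by nlinarith)
    have h2 : 1 / (m - l - 2 * n * N) < 0 := one_div_neg.mpr (by nlinarith)
    linarith
  rw [Finset.sum_congr rfl fun k _ => hsplit k, ← Finset.mul_sum, Finset.sum_add_distrib,
    Finset.sum_Ico_int_sub]
  exact mul_nonneg (by simp only [one_div, inv_nonneg]; linarith)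
    (add_nonneg (Finset.sum_nonneg fun k _ => hpair k) hends)

variable {r : ℕ} {A : ℤ → ℝ}

theorem mul_one_div_sq_sub_le_div_one_div_pow_sub (hl : l ≠ 0) (hlm : |l| < m) (hmn : m ≤ n)
    (hr : r ≠ 0) (hA : 0 ≤ A 0)
    (hdecay : ∀ k : ℤ, ((l + 2 * n * k) ^ 2) ^ r * A k ≤ (l ^ 2) ^ r * A 0) (k : ℤ) :
    (m ^ 2) ^ r * ((l ^ 2) ^ r * A 0) * (m ^ 2 - l ^ 2) / ((m ^ 2) ^ r - (l ^ 2) ^ r) *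
        (1 / (m ^ 2 - (l + 2 * n * k) ^ 2)) ≤
      A k / (1 / ((l + 2 * n * k) ^ 2) ^ r - 1 / (m ^ 2) ^ r) := by
  have hm : 0 < m := (abs_nonneg l).trans_lt hlm
  have hlm2 : l ^ 2 < m ^ 2 := sq_lt_sq' (abs_lt.mp hlm).1 (abs_lt.mp hlm).2
  rcases eq_or_ne k 0 with rfl | hk
  · have hl2 : 0 < l ^ 2 := by positivity
    have h1 : m ^ 2 - l ^ 2 ≠ 0 := (sub_pos.mpr hlm2).ne'
    have h2 : (m ^ 2) ^ r - (l ^ 2) ^ r ≠ 0 := (sub_pos.mpr (pow_lt_pow_left₀ hlm2 hl2.le hr)).ne'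
    apply le_of_eq
    simp only [Int.cast_zero, mul_zero, add_zero]
    field_simp
  · exact mul_one_div_sub_le_div_one_div_pow_sub hr (sq_nonneg l) hlm2
      (sq_lt_add_two_mul_mul_sq hlm hmn hk) (by positivity) (hdecay k)

theorem sum_Ico_div_one_div_pow_sub_nonneg (hl : l ≠ 0) (hlm : |l| < m) (hmn : m ≤ n)
    (hr : r ≠ 0) (hA : 0 ≤ A 0)
    (hdecay : ∀ k : ℤ, ((l + 2 * n * k) ^ 2) ^ r * A k ≤ (l ^ 2) ^ r * A 0) (N : ℕ) :
    0 ≤ ∑ k ∈ Ico (-(N : ℤ)) N, A k / (1 / ((l + 2 * n * k) ^ 2) ^ r - 1 / (m ^ 2) ^ r) := by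
  have hlm2 : l ^ 2 < m ^ 2 := sq_lt_sq' (abs_lt.mp hlm).1 (abs_lt.mp hlm).2
  have hc : 0 ≤ (m ^ 2) ^ r * ((l ^ 2) ^ r * A 0) * (m ^ 2 - l ^ 2) /
      ((m ^ 2) ^ r - (l ^ 2) ^ r) :=
    div_nonneg (by have := sub_pos.mpr hlm2; positivity)
      (sub_nonneg.mpr (pow_le_pow_left₀ (sq_nonneg l) hlm2.le r))
  calc 0 ≤ _ * ∑ k ∈ Ico (-(N : ℤ)) N, 1 / (m ^ 2 - (l + 2 * n * k) ^ 2) :=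
        mul_nonneg hc (sum_Ico_one_div_sq_sub_sq_nonneg hlm hmn N)
    _ ≤ _ := by
        rw [Finset.mul_sum]
        exact Finset.sum_le_sum fun k _ =>
          mul_one_div_sq_sub_le_div_one_div_pow_sub hl hlm hmn hr hA hdecay k

end ShiftedFrequencies

theorem stmt19_general (B : ℝ → ℂ) (r n m : ℕ) (hr : 1 ≤ r) (hmn : m ≤ n)
    (h : ∀ l : ℤ, 1 ≤ |l| → |l| ≤ (m : ℤ) - 1 → ∀ k : ℤ,
        ((|l + 2 * (n : ℤ) * k| : ℤ) : ℝ) ^ r * ‖fc B (l + 2 * (n : ℤ) * k)‖ ≤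
          ((|l| : ℤ) : ℝ) ^ r * ‖fc B l‖) :
    ∀ l : ℤ, 1 ≤ |l| → |l| ≤ (m : ℤ) - 1 →
      0 ≤ ∑' k : ℤ, ‖fc B (l + 2 * (n : ℤ) * k)‖ ^ 2 /
            (1 / (((l + 2 * (n : ℤ) * k : ℤ) : ℝ)) ^ (2 * r) - 1 / (m : ℝ) ^ (2 * r)) := by
  intro l hl hlm
  have hl' : (l : ℝ) ≠ 0 := by exact_mod_cast abs_pos.mp (by omega)
  have hlm' : |(l : ℝ)| < m := by
    rw [← Int.cast_abs]
    exact (Int.cast_le.mpr hlm).trans_lt (by push_cast; linarith)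
  have hdecay : ∀ k : ℤ, (((l : ℝ) + 2 * n * k) ^ 2) ^ r * ‖fc B (l + 2 * n * k)‖ ^ 2 ≤
      ((l : ℝ) ^ 2) ^ r * ‖fc B (l + 2 * n * (0 : ℤ))‖ ^ 2 := by
    intro k
    have := pow_le_pow_left₀ (by positivity) (h l hl hlm k) 2
    push_cast [mul_pow, pow_right_comm _ r 2, sq_abs] at this ⊢
    simpa only [mul_zero, add_zero] using this
  push_cast [pow_mul]
  exact tsum_nonneg_of_sum_Ico_nonneg fun N => sum_Ico_div_one_div_pow_sub_nonneg hl' hlm'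
    (by exact_mod_cast hmn) (by omega) (by positivity) hdecay N

theorem stmt19 (B : ℝ → ℂ) (r n m : ℕ) (hr : 1 ≤ r) (hn : 1 ≤ n) (hm : 1 ≤ m) (hmn : m ≤ n)
    (hper : Function.Periodic B (2 * Real.pi)) (hB : sqInt B)
    (h : ∀ l : ℤ, 1 ≤ |l| → |l| ≤ (m : ℤ) - 1 → ∀ k : ℤ,
        ((|l + 2 * (n : ℤ) * k| : ℤ) : ℝ) ^ r * ‖fc B (l + 2 * (n : ℤ) * k)‖ ≤
          ((|l| : ℤ) : ℝ) ^ r * ‖fc B l‖) :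
    ∀ l : ℤ, 1 ≤ |l| → |l| ≤ (m : ℤ) - 1 →
      0 ≤ ∑' k : ℤ, ‖fc B (l + 2 * (n : ℤ) * k)‖ ^ 2 /
            (1 / (((l + 2 * (n : ℤ) * k : ℤ) : ℝ)) ^ (2 * r) - 1 / (m : ℝ) ^ (2 * r)) :=
  stmt19_general B r n m hr hmn h
end
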